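/- There exists a constant C > 0 such that for every integer n ≥ 2, every function f : Λ_n → ℝ with f ≥ 0, and every real t ≥ n², one has ∑_{x∈Λ_n} (exp(tΔ_n)f)(x) ≤ C·e^{−λ_𝟏(t − n²)}·∑_{x∈Λ_n} f(x), where exp(tΔ_n) is the matrix exponential of tΔ_n. (Probabilistically, ∑_x (exp(tΔ_n)f)(x) is the annealed expectation ∑_x E[f(S^{x}_{−t})] for the backwards-in-time random walk absorbed at ∂Λ_n.) -/

import Mathlib

/-!
The functions `ψ_{jk}(x) = sin(π j x₁ / n) sin(π k x₂ / n)`, `1 ≤ j, k ≤ n - 1` (`sinMode2`),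
vanish on `∂Λ_n`, so `Δ_n` acts on them as the Laplacian of `ℤ²`, and they are eigenvectors with
eigenvalues `-(λ_j + λ_k) / 2`, `λ_j = 1 - cos(π j / n)` (`eigval`). By discrete sine
orthogonality the constant function `1` is `∑ c_j c_k ψ_{jk}` with `|c_j| ≤ 2` (`sineCoeff`), so
`e^{tΔ_n} 1` factorises as `h_t(x₁) h_t(x₂)` with `h_t = ∑_j c_j e^{-t λ_j / 2} sin(π j · / n)`
(`heatProfile`). Since `n² λ_j ≥ 2 j²`, for `t ≥ n²` the `j`-th term of `h_t` is at most
`2 e^{-λ_𝟏 (t - n²) / 2} e^{-j}`, hence `|h_t| ≤ 2 e^{-λ_𝟏 (t - n²) / 2}`. Finally `Δ_n` is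
symmetric, so the column sums of `e^{tΔ_n}` are the values of `e^{tΔ_n} 1`, and `C = 4` works.
-/

open scoped BigOperators

namespace DGFFStmt

/-- The interior box `Λ_n = {1,…,n−1}²`, encoded with `Fin (n-1) × Fin (n-1)`;
the lattice coordinate of `x` is `((x.1 : ℤ) + 1, (x.2 : ℤ) + 1)`. -/
abbrev Lam (n : ℕ) := Fin (n - 1) × Fin (n - 1)

/-- Lattice coordinates of a point of `Λ_n`. -/
def coord (n : ℕ) (x : Lam n) : ℤ × ℤ := (((x.1 : ℕ) : ℤ) + 1, ((x.2 : ℕ) : ℤ) + 1)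

/-- Adjacency in `ℤ²`: Euclidean distance 1. -/
def adj (p q : ℤ × ℤ) : Prop := (p.1 - q.1) ^ 2 + (p.2 - q.2) ^ 2 = 1

instance (p q : ℤ × ℤ) : Decidable (adj p q) := by unfold adj; infer_instance

/-- The discrete Laplacian `Δ_n` on `Λ_n`. -/
noncomputable def Delta (n : ℕ) : Matrix (Lam n) (Lam n) ℝ :=
  Matrix.of fun x y =>
    if x = y then -1 else if adj (coord n x) (coord n y) then (1 : ℝ) / 4 else 0

/-- `λ_𝟏 = 1 − cos(π/n)`. -/
noncomputable def lamOne (n : ℕ) : ℝ := 1 - Real.cos (Real.pi / n)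

open Real Finset Matrix

theorem exp_mulVec_of_mulVec_eq_smul {ι : Type*} [Fintype ι] [DecidableEq ι]
    {A : Matrix ι ι ℝ} {v : ι → ℝ} {μ : ℝ} (h : A *ᵥ v = μ • v) :
    NormedSpace.exp A *ᵥ v = Real.exp μ • v := by
  let _ := Matrix.linftyOpNormedRing (n := ι) (α := ℝ)
  let _ := Matrix.linftyOpNormedAlgebra (n := ι) (R := ℝ) (α := ℝ)
  have hpow (m : ℕ) : A ^ m *ᵥ v = μ ^ m • v := by
    induction m with
    | zero => simp
    | succ m ih => rw [pow_succ', ← mulVec_mulVec, ih, mulVec_smul, h, smul_smul, pow_succ]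
  let evalAt : Matrix ι ι ℝ →+ (ι → ℝ) := AddMonoidHom.mk' (· *ᵥ v) (add_mulVec · · v)
  have hA := (NormedSpace.exp_series_hasSum_exp' (𝕂 := ℝ) A).map evalAt
    (continuous_id.matrix_mulVec continuous_const)
  refine hA.unique ?_
  rw [Real.exp_eq_exp_ℝ]
  convert (NormedSpace.exp_series_hasSum_exp' (𝕂 := ℝ) μ).smul_const v using 2 with m
  simp [evalAt, smul_mulVec, hpow, smul_smul]

theorem exp_mulVec_sum_smul {ι κ : Type*} [Fintype ι] [DecidableEq ι]
    (A : Matrix ι ι ℝ) (s : Finset κ) (c μ : κ → ℝ) (w : κ → ι → ℝ)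
    (hw : ∀ i ∈ s, A *ᵥ w i = μ i • w i) :
    NormedSpace.exp A *ᵥ ∑ i ∈ s, c i • w i = ∑ i ∈ s, (c i * Real.exp (μ i)) • w i := by
  rw [mulVec_sum]
  refine sum_congr rfl fun i hi => ?_
  rw [mulVec_smul, exp_mulVec_of_mulVec_eq_smul (hw i hi), smul_smul]

theorem sum_mulVec_le_of_sum_apply_le {R m n : Type*} [Semiring R] [PartialOrder R]
    [IsOrderedRing R] [Fintype m] [Fintype n] {A : Matrix m n R} {f : n → R} (hf : ∀ y, 0 ≤ f y)
    {M : R} (hA : ∀ y, ∑ x, A x y ≤ M) : ∑ x, (A *ᵥ f) x ≤ M * ∑ y, f y := by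
  calc ∑ x, (A *ᵥ f) x = ∑ y, (∑ x, A x y) * f y := by
        simp only [mulVec, dotProduct, sum_mul]
        exact sum_comm
    _ ≤ ∑ y, M * f y := sum_le_sum fun y _ => mul_le_mul_of_nonneg_right (hA y) (hf y)
    _ = M * ∑ y, f y := (mul_sum ..).symm

theorem two_mul_sin_half_mul_sum_range_cos (θ : ℝ) (m : ℕ) :
    2 * sin (θ / 2) * ∑ j ∈ range m, cos (j * θ) = sin ((m - 1 / 2) * θ) + sin (θ / 2) := by
  induction m with
  | zero => rw [show ((0 : ℕ) - 1 / 2 : ℝ) * θ = -(θ / 2) by ring]; simp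
  | succ m ih =>
    have telescope : sin ((m + 1 / 2) * θ) - sin ((m - 1 / 2) * θ) =
        2 * sin (θ / 2) * cos (m * θ) := by
      rw [sin_sub_sin]; ring_nf
    rw [sum_range_succ, mul_add, ih]
    push_cast
    rw [show ((m : ℝ) + 1 - 1 / 2) = m + 1 / 2 by ring]
    linarith [telescope]

theorem sum_range_cos_mul_pi_div {n : ℕ} (hn : n ≠ 0) {d : ℤ} (hd : ¬ (2 * n : ℤ) ∣ d) :
    ∑ j ∈ range n, cos (j * (π * d / n)) = (1 - cos (d * π)) / 2 := by
  set θ := π * d / n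
  have hsin : sin (θ / 2) ≠ 0 := by
    rw [sin_ne_zero_iff]
    rintro k hk
    refine hd ⟨k, ?_⟩
    have : (d : ℝ) = 2 * n * k := by
      simp only [θ] at hk
      field_simp at hk
      linarith
    exact_mod_cast this
  have hangle : (n - 1 / 2) * θ = d * π - θ / 2 := by
    simp only [θ]; field_simp
  have key := two_mul_sin_half_mul_sum_range_cos θ n
  rw [hangle, sin_sub, sin_int_mul_pi] at key
  apply mul_left_cancel₀ (mul_ne_zero two_ne_zero hsin)
  linear_combination key

theorem not_two_mul_dvd {n : ℕ} {d : ℤ} (hd : d ≠ 0) (hdn : |d| < 2 * n) : ¬ (2 * n : ℤ) ∣ d :=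
  fun h => hd (Int.eq_zero_of_abs_lt_dvd h hdn)

noncomputable def sinMode (n j : ℕ) (a : ℤ) : ℝ := sin (π * j * a / n)

noncomputable def eigval (n j : ℕ) : ℝ := 1 - cos (π * j / n)

theorem sinMode_zero_left (n : ℕ) (a : ℤ) : sinMode n 0 a = 0 := by simp [sinMode]

theorem sinMode_zero_right (n j : ℕ) : sinMode n j 0 = 0 := by simp [sinMode]

theorem sinMode_self (n j : ℕ) : sinMode n j n = 0 := by
  rcases eq_or_ne n 0 with rfl | hn
  · simp [sinMode]
  · rw [sinMode, show π * j * ((n : ℤ) : ℝ) / n = j * π by push_cast; field_simp]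
    exact sin_nat_mul_pi j

theorem abs_sinMode_le_one (n j : ℕ) (a : ℤ) : |sinMode n j a| ≤ 1 := abs_sin_le_one _

theorem sinMode_sub_one_add_sinMode_add_one (n j : ℕ) (a : ℤ) :
    sinMode n j (a - 1) + sinMode n j (a + 1) = 2 * (1 - eigval n j) * sinMode n j a := by
  simp only [sinMode, eigval]
  push_cast
  rw [show π * j * (a - 1) / n = π * j * a / n - π * j / n by ring,
    show π * j * (a + 1) / n = π * j * a / n + π * j / n by ring, sin_sub, sin_add]
  ring

theorem sum_Ico_sinMode_mul_sinMode {n A B : ℕ} (hA : A ∈ Ico 1 n) (hB : B ∈ Ico 1 n) :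
    ∑ j ∈ Ico 1 n, sinMode n j A * sinMode n j B = if A = B then (n : ℝ) / 2 else 0 := by
  rw [mem_Ico] at hA hB
  have hn : n ≠ 0 := by omega
  -- `sin x sin y = (cos (x - y) - cos (x + y)) / 2` turns the sum into two cosine sums
  have hterm (j : ℕ) : sinMode n j A * sinMode n j B =
      (cos (j * (π * ((A - B : ℤ) : ℝ) / n)) - cos (j * (π * ((A + B : ℤ) : ℝ) / n))) / 2 := by
    rw [sinMode, sinMode, cos_sub_cos]
    push_cast
    ring_nf
    rw [sin_neg]
    ring
  have hsum := sum_range_cos_mul_pi_div hn (d := A + B) (not_two_mul_dvd (by omega)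
    (by rw [abs_lt]; omega))
  have hrange : ∑ j ∈ Ico 1 n, sinMode n j A * sinMode n j B =
      ∑ j ∈ range n, sinMode n j A * sinMode n j B := by
    rw [range_eq_Ico, sum_eq_sum_Ico_succ_bot (show 0 < n by omega)]
    simp [sinMode_zero_left]
  rw [hrange]
  simp only [hterm, ← sum_div, sum_sub_distrib, hsum]
  split_ifs with hAB
  · subst hAB
    push_cast
    simp only [sub_self, mul_zero, zero_div, cos_zero, sum_const, card_range, nsmul_eq_mul, mul_one]
    rw [show ((A : ℝ) + A) * π = (A : ℕ) * (2 * π) by ring, cos_nat_mul_two_pi]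
    ring
  · rw [sum_range_cos_mul_pi_div hn (not_two_mul_dvd (by omega) (by rw [abs_lt]; omega))]
    push_cast
    rw [add_mul, sub_mul, cos_add, cos_sub, sin_nat_mul_pi]
    ring

theorem adj_iff {c p : ℤ × ℤ} :
    adj c p ↔
      p = (c.1 - 1, c.2) ∨ p = (c.1 + 1, c.2) ∨ p = (c.1, c.2 - 1) ∨ p = (c.1, c.2 + 1) := by
  obtain ⟨c1, c2⟩ := c
  obtain ⟨p1, p2⟩ := p
  simp only [adj, Prod.mk.injEq]
  constructor
  · intro h
    obtain ⟨u, rfl⟩ : ∃ u, p1 = c1 - u := ⟨c1 - p1, by ring⟩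
    obtain ⟨v, rfl⟩ : ∃ v, p2 = c2 - v := ⟨c2 - p2, by ring⟩
    simp only [sub_sub_cancel] at *
    have hu : -1 ≤ u ∧ u ≤ 1 := by constructor <;> nlinarith [sq_nonneg v]
    have hv : -1 ≤ v ∧ v ≤ 1 := by constructor <;> nlinarith [sq_nonneg u]
    obtain ⟨hu1, hu2⟩ := hu
    obtain ⟨hv1, hv2⟩ := hv
    interval_cases u <;> interval_cases v <;> simp_all
  · rintro (⟨rfl, rfl⟩ | ⟨rfl, rfl⟩ | ⟨rfl, rfl⟩ | ⟨rfl, rfl⟩) <;> ring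

theorem adj_comm {p q : ℤ × ℤ} : adj p q ↔ adj q p := by
  simp only [adj]
  constructor <;> intro h <;> linarith [h]

theorem not_adj_self (p : ℤ × ℤ) : ¬ adj p p := by simp [adj]

theorem coord_injective (n : ℕ) : Function.Injective (coord n) := by
  rintro ⟨a1, a2⟩ ⟨b1, b2⟩ h
  simp only [coord, Prod.mk.injEq, add_left_inj, Nat.cast_inj, Fin.val_inj] at h
  rw [h.1, h.2]

theorem mem_range_coord {n : ℕ} {p : ℤ × ℤ} (h1 : 0 < p.1) (h1' : p.1 < n) (h2 : 0 < p.2)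
    (h2' : p.2 < n) : p ∈ Set.range (coord n) :=
  ⟨(⟨(p.1 - 1).toNat, by omega⟩, ⟨(p.2 - 1).toNat, by omega⟩), by ext <;> simp [coord] <;> omega⟩

theorem Delta_isSymm (n : ℕ) : (Delta n).IsSymm := by
  ext x y
  simp only [transpose_apply, Delta, of_apply, eq_comm (a := x), adj_comm (p := coord n x)]

noncomputable def latticeLaplacian (Ψ : ℤ × ℤ → ℝ) (p : ℤ × ℤ) : ℝ :=
  (Ψ (p.1 - 1, p.2) + Ψ (p.1 + 1, p.2) + Ψ (p.1, p.2 - 1) + Ψ (p.1, p.2 + 1)) / 4 - Ψ p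

theorem sum_ite_adj_coord {n : ℕ} {Ψ : ℤ × ℤ → ℝ}
    (hΨ : ∀ p : ℤ × ℤ, p.1 = 0 ∨ p.1 = n ∨ p.2 = 0 ∨ p.2 = n → Ψ p = 0) (x : Lam n) :
    ∑ y, (if adj (coord n x) (coord n y) then Ψ (coord n y) else 0) =
      Ψ ((coord n x).1 - 1, (coord n x).2) + Ψ ((coord n x).1 + 1, (coord n x).2) +
        Ψ ((coord n x).1, (coord n x).2 - 1) + Ψ ((coord n x).1, (coord n x).2 + 1) := by
  set c := coord n x with hc
  have hc1 : 0 < c.1 ∧ c.1 < n := by simp only [hc, coord]; omega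
  have hc2 : 0 < c.2 ∧ c.2 < n := by simp only [hc, coord]; omega
  set N : Finset (ℤ × ℤ) := {(c.1 - 1, c.2), (c.1 + 1, c.2), (c.1, c.2 - 1), (c.1, c.2 + 1)}
  have hN (p : ℤ × ℤ) : p ∈ N ↔ adj c p := by simp [N, adj_iff]
  rw [← sum_filter, ← sum_image (coord_injective n).injOn, sum_subset (s₂ := N)]
  · rw [sum_insert, sum_insert, sum_insert, sum_singleton, add_assoc, add_assoc] <;>
      simp [Prod.ext_iff] <;> omega
  · simp only [subset_iff, mem_image, mem_filter, hN]
    rintro _ ⟨y, ⟨-, hy⟩, rfl⟩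
    exact hy
  · intro p hpN hp
    apply hΨ
    by_contra hb
    have hpc : 0 < p.1 ∧ p.1 < n ∧ 0 < p.2 ∧ p.2 < n := by
      simp only [N, mem_insert, mem_singleton] at hpN
      rcases hpN with rfl | rfl | rfl | rfl <;> simp only at hb ⊢ <;> omega
    obtain ⟨y, rfl⟩ := mem_range_coord hpc.1 hpc.2.1 hpc.2.2.1 hpc.2.2.2
    exact hp (mem_image_of_mem _ (mem_filter.2 ⟨mem_univ y, (hN _).1 hpN⟩))

theorem Delta_mulVec_comp_coord {n : ℕ} {Ψ : ℤ × ℤ → ℝ}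
    (hΨ : ∀ p : ℤ × ℤ, p.1 = 0 ∨ p.1 = n ∨ p.2 = 0 ∨ p.2 = n → Ψ p = 0) :
    Delta n *ᵥ (Ψ ∘ coord n) = latticeLaplacian Ψ ∘ coord n := by
  funext x
  have hDelta (y : Lam n) : Delta n x y = (if x = y then -1 else 0) +
      (if adj (coord n x) (coord n y) then 1 / 4 else 0) := by
    by_cases h : x = y <;> simp [Delta, h, not_adj_self]
  simp only [mulVec, dotProduct, hDelta, add_mul, sum_add_distrib, ite_mul, neg_one_mul, zero_mul,
    sum_ite_eq, mem_univ, if_true, Function.comp_apply]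
  have hquarter : ∑ y, (if adj (coord n x) (coord n y) then 1 / 4 * Ψ (coord n y) else 0) =
      (∑ y, if adj (coord n x) (coord n y) then Ψ (coord n y) else 0) / 4 := by
    rw [sum_div]
    exact sum_congr rfl fun y _ => by split_ifs <;> ring
  rw [hquarter, sum_ite_adj_coord hΨ, latticeLaplacian]
  ring

theorem latticeLaplacian_sinMode_mul_sinMode (n j k : ℕ) :
    latticeLaplacian (fun p => sinMode n j p.1 * sinMode n k p.2) =
      -((eigval n j + eigval n k) / 2) • fun p => sinMode n j p.1 * sinMode n k p.2 := by
  funext p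
  simp only [latticeLaplacian, Pi.smul_apply, smul_eq_mul]
  linear_combination sinMode n k p.2 / 4 * sinMode_sub_one_add_sinMode_add_one n j p.1 +
    sinMode n j p.1 / 4 * sinMode_sub_one_add_sinMode_add_one n k p.2

noncomputable def sinMode2 (n j k : ℕ) (x : Lam n) : ℝ :=
  sinMode n j (coord n x).1 * sinMode n k (coord n x).2

theorem Delta_mulVec_sinMode2 (n j k : ℕ) :
    Delta n *ᵥ sinMode2 n j k = -((eigval n j + eigval n k) / 2) • sinMode2 n j k := by
  have hΨ (p : ℤ × ℤ) (hp : p.1 = 0 ∨ p.1 = n ∨ p.2 = 0 ∨ p.2 = n) :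
      sinMode n j p.1 * sinMode n k p.2 = 0 := by
    rcases hp with h | h | h | h <;> simp [h, sinMode_zero_right, sinMode_self]
  exact (Delta_mulVec_comp_coord hΨ).trans
    (congrArg (· ∘ coord n) (latticeLaplacian_sinMode_mul_sinMode n j k))

theorem coord_eq_natCast (n : ℕ) (x : Lam n) :
    coord n x = ((((x.1 : ℕ) + 1 : ℕ) : ℤ), (((x.2 : ℕ) + 1 : ℕ) : ℤ)) := by
  simp [coord]

noncomputable def sineCoeff (n j : ℕ) : ℝ := 2 / n * ∑ b ∈ Ico 1 n, sinMode n j b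

theorem sum_sineCoeff_mul_sinMode {n a : ℕ} (ha : a ∈ Ico 1 n) :
    ∑ j ∈ Ico 1 n, sineCoeff n j * sinMode n j a = 1 := by
  have hn : (n : ℝ) ≠ 0 := by rw [mem_Ico] at ha; exact_mod_cast (show n ≠ 0 by omega)
  calc ∑ j ∈ Ico 1 n, sineCoeff n j * sinMode n j a
      = 2 / n * ∑ b ∈ Ico 1 n, ∑ j ∈ Ico 1 n, sinMode n j b * sinMode n j a := by
        simp only [sineCoeff, mul_sum, sum_mul, mul_assoc]
        exact sum_comm
    _ = 2 / n * ∑ b ∈ Ico 1 n, if b = a then (n : ℝ) / 2 else 0 := by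
        rw [sum_congr rfl fun b hb => sum_Ico_sinMode_mul_sinMode hb ha]
    _ = 1 := by
        rw [sum_ite_eq', if_pos ha]
        field_simp

theorem abs_sineCoeff_le (n j : ℕ) : |sineCoeff n j| ≤ 2 := by
  rw [sineCoeff, abs_mul, abs_of_nonneg (by positivity)]
  have hsum : |∑ b ∈ Ico 1 n, sinMode n j b| ≤ n :=
    calc |∑ b ∈ Ico 1 n, sinMode n j b| ≤ ∑ b ∈ Ico 1 n, (1 : ℝ) :=
          (abs_sum_le_sum_abs _ _).trans (sum_le_sum fun b _ => abs_sinMode_le_one n j b)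
      _ ≤ n := by simp
  rcases eq_or_ne n 0 with rfl | hn
  · simp
  · calc 2 / n * |∑ b ∈ Ico 1 n, sinMode n j b| ≤ 2 / n * n := by gcongr
      _ = 2 := div_mul_cancel₀ 2 (Nat.cast_ne_zero.2 hn)

theorem sum_sineCoeff_smul_sinMode2 (n : ℕ) :
    ∑ p ∈ Ico 1 n ×ˢ Ico 1 n, (sineCoeff n p.1 * sineCoeff n p.2) • sinMode2 n p.1 p.2 = 1 := by
  funext x
  have hx (i : Fin (n - 1)) : (i : ℕ) + 1 ∈ Ico 1 n := by rw [mem_Ico]; omega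
  simp only [Finset.sum_apply, Pi.smul_apply, smul_eq_mul, sinMode2, Pi.one_apply, sum_product,
    coord_eq_natCast]
  calc _ = (∑ j ∈ Ico 1 n, sineCoeff n j * sinMode n j ((x.1 : ℕ) + 1 : ℕ)) *
        ∑ k ∈ Ico 1 n, sineCoeff n k * sinMode n k ((x.2 : ℕ) + 1 : ℕ) := by
        rw [sum_mul_sum]
        exact sum_congr rfl fun j _ => sum_congr rfl fun k _ => by ring
    _ = 1 := by
        rw [sum_sineCoeff_mul_sinMode (hx x.1), sum_sineCoeff_mul_sinMode (hx x.2), one_mul]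

noncomputable def heatProfile (n : ℕ) (t : ℝ) (a : ℤ) : ℝ :=
  ∑ j ∈ Ico 1 n, sineCoeff n j * Real.exp (-(t * eigval n j) / 2) * sinMode n j a

theorem exp_smul_Delta_mulVec_one (n : ℕ) (t : ℝ) :
    NormedSpace.exp (t • Delta n) *ᵥ 1 =
      fun x => heatProfile n t (coord n x).1 * heatProfile n t (coord n x).2 := by
  rw [← sum_sineCoeff_smul_sinMode2 n, exp_mulVec_sum_smul _ _ _
    (fun p => t * -((eigval n p.1 + eigval n p.2) / 2))]
  · funext x
    simp only [Finset.sum_apply, Pi.smul_apply, smul_eq_mul, sinMode2, heatProfile, sum_mul_sum,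
      sum_product]
    refine sum_congr rfl fun j _ => sum_congr rfl fun k _ => ?_
    rw [show t * -((eigval n j + eigval n k) / 2) = -(t * eigval n j) / 2 + -(t * eigval n k) / 2
      by ring, Real.exp_add]
    ring
  · intro p _
    rw [smul_mulVec, Delta_mulVec_sinMode2, smul_smul]

theorem sum_exp_smul_Delta_apply (n : ℕ) (t : ℝ) (y : Lam n) :
    ∑ x, NormedSpace.exp (t • Delta n) x y =
      heatProfile n t (coord n y).1 * heatProfile n t (coord n y).2 := by
  have hsymm := ((Delta_isSymm n).smul t).exp
  calc ∑ x, NormedSpace.exp (t • Delta n) x y = (NormedSpace.exp (t • Delta n) *ᵥ 1) y := by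
        simp only [mulVec, dotProduct, Pi.one_apply, mul_one]
        exact sum_congr rfl fun x _ => hsymm.apply y x
    _ = _ := by rw [exp_smul_Delta_mulVec_one]

theorem lamOne_le_eigval {n j : ℕ} (hj : 1 ≤ j) (hjn : j ≤ n) : lamOne n ≤ eigval n j := by
  have hn : (0 : ℝ) < n := by exact_mod_cast (show 0 < n by omega)
  have hj' : (1 : ℝ) ≤ j := by exact_mod_cast hj
  have hjn' : (j : ℝ) ≤ n := by exact_mod_cast hjn
  rw [lamOne, eigval, sub_le_sub_iff_left]
  apply cos_le_cos_of_nonneg_of_le_pi (by positivity)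
  · rw [div_le_iff₀ hn]; nlinarith [pi_pos]
  · rw [div_le_div_iff_of_pos_right hn]; nlinarith [pi_pos]

theorem two_mul_sq_le_sq_mul_eigval {n j : ℕ} (hjn : j ≤ n) :
    2 * (j : ℝ) ^ 2 ≤ n ^ 2 * eigval n j := by
  rcases eq_or_ne n 0 with rfl | hn
  · simp_all
  have hn' : (0 : ℝ) < n := by exact_mod_cast Nat.pos_of_ne_zero hn
  have hjn' : (j : ℝ) ≤ n := by exact_mod_cast hjn
  have habs : |π * j / n| ≤ π := by
    rw [abs_of_nonneg (by positivity), div_le_iff₀ hn']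
    nlinarith [pi_pos]
  have h := cos_le_one_sub_mul_cos_sq habs
  rw [eigval]
  have : 2 / π ^ 2 * (π * j / n) ^ 2 * n ^ 2 = 2 * j ^ 2 := by field_simp
  nlinarith

theorem exp_neg_mul_eigval_le {n j : ℕ} {t : ℝ} (hj : 1 ≤ j) (hjn : j ≤ n) (ht : (n : ℝ) ^ 2 ≤ t) :
    Real.exp (-(t * eigval n j) / 2) ≤
      Real.exp (-(lamOne n * (t - n ^ 2)) / 2) * Real.exp (-1) ^ j := by
  rw [← Real.exp_nat_mul, ← Real.exp_add, Real.exp_le_exp]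
  have hj' : (1 : ℝ) ≤ j := by exact_mod_cast hj
  have h1 := lamOne_le_eigval hj hjn
  have h2 := two_mul_sq_le_sq_mul_eigval hjn
  -- `t λ_j = (t - n²) λ_j + n² λ_j ≥ (t - n²) λ_𝟏 + 2 j²`
  nlinarith [mul_le_mul_of_nonneg_left h1 (sub_nonneg.2 ht)]

theorem sum_Ico_exp_neg_one_pow_le (n : ℕ) : ∑ j ∈ Ico 1 n, Real.exp (-1) ^ j ≤ 1 := by
  have hexp : 2 * Real.exp (-1) ≤ 1 := by
    rw [Real.exp_neg, ← div_eq_mul_inv, div_le_one (Real.exp_pos 1)]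
    linarith [Real.add_one_le_exp 1]
  refine (geom_sum_Ico_le_of_lt_one (Real.exp_pos _).le
    (Real.exp_lt_one_iff.2 (by norm_num))).trans ?_
  rw [pow_one, div_le_one (by linarith)]
  linarith

theorem abs_heatProfile_le {n : ℕ} {t : ℝ} (ht : (n : ℝ) ^ 2 ≤ t) (a : ℤ) :
    |heatProfile n t a| ≤ 2 * Real.exp (-(lamOne n * (t - n ^ 2)) / 2) := by
  set R := Real.exp (-(lamOne n * (t - n ^ 2)) / 2)
  have hterm (j : ℕ) (hj : j ∈ Ico 1 n) :
      |sineCoeff n j * Real.exp (-(t * eigval n j) / 2) * sinMode n j a| ≤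
        2 * R * Real.exp (-1) ^ j := by
    rw [mem_Ico] at hj
    rw [abs_mul, abs_mul, abs_of_pos (Real.exp_pos _)]
    calc |sineCoeff n j| * Real.exp (-(t * eigval n j) / 2) * |sinMode n j a|
        ≤ 2 * (R * Real.exp (-1) ^ j) * 1 := by
          gcongr
          · exact abs_sineCoeff_le n j
          · exact exp_neg_mul_eigval_le hj.1 hj.2.le ht
          · exact abs_sinMode_le_one n j a
      _ = 2 * R * Real.exp (-1) ^ j := by ring
  calc |heatProfile n t a| ≤ ∑ j ∈ Ico 1 n, 2 * R * Real.exp (-1) ^ j :=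
        (abs_sum_le_sum_abs _ _).trans (sum_le_sum hterm)
    _ = 2 * R * ∑ j ∈ Ico 1 n, Real.exp (-1) ^ j := (mul_sum ..).symm
    _ ≤ 2 * R * 1 := by gcongr; exact sum_Ico_exp_neg_one_pow_le n
    _ = 2 * R := mul_one _

/-- Annealed expectation bound: for nonnegative `f` and `t ≥ n²`,
`∑_x (e^{tΔ_n} f)(x) ≤ C e^{−λ_𝟏(t−n²)} ∑_x f(x)`. -/
theorem annealed_expectation_bound :
    ∃ C : ℝ, 0 < C ∧ ∀ n : ℕ, 2 ≤ n → ∀ f : Lam n → ℝ, (∀ x, 0 ≤ f x) →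
      ∀ t : ℝ, (n : ℝ) ^ 2 ≤ t →
        ∑ x : Lam n, (NormedSpace.exp (t • Delta n)).mulVec f x
          ≤ C * Real.exp (-(lamOne n) * (t - (n : ℝ) ^ 2)) * ∑ x : Lam n, f x := by
  refine ⟨4, by norm_num, fun n _ f hf t ht => sum_mulVec_le_of_sum_apply_le hf fun y => ?_⟩
  rw [sum_exp_smul_Delta_apply]
  set R := Real.exp (-(lamOne n * (t - n ^ 2)) / 2)
  calc heatProfile n t (coord n y).1 * heatProfile n t (coord n y).2
      ≤ |heatProfile n t (coord n y).1| * |heatProfile n t (coord n y).2| :=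
        (le_abs_self _).trans (abs_mul _ _).le
    _ ≤ (2 * R) * (2 * R) :=
        mul_le_mul (abs_heatProfile_le ht _) (abs_heatProfile_le ht _) (abs_nonneg _)
          (by positivity)
    _ = 4 * Real.exp (-(lamOne n) * (t - (n : ℝ) ^ 2)) := by
        rw [mul_mul_mul_comm, ← Real.exp_add]
        ring_nf

end DGFFStmt
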